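/- Let n ≥ 1, let x₁,…,x_n be real numbers, let y₁,…,y_n be pairwise distinct complex numbers, and let R > max_j |y_j|. Then the n-fold iterated contour integral over the circles |λ_i| = R (each traversed once counterclockwise) satisfies ∮_{|λ₁|=R} ⋯ ∮_{|λ_n|=R} det(e^{x_i λ_j})_{1≤i,j≤n} · det((λ_i − y_j)^{-1})_{1≤i,j≤n} dλ_n ⋯ dλ₁ = (2πi)^n · n! · det(e^{x_i y_j})_{1≤i,j≤n}. -/

import Mathlib

open Matrix Equiv

/-- The `n`-fold iterated contour integral
`∮_{|λ₁|=R} ⋯ ∮_{|λₙ|=R} f(λ₁,…,λₙ) dλₙ ⋯ dλ₁`, each circle centered at `0` with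
radius `R`, traversed once counterclockwise. -/
noncomputable def multiCircleIntegral : (n : ℕ) → ((Fin n → ℂ) → ℂ) → ℝ → ℂ
  | 0, f, _ => f ![]
  | n + 1, f, R => ∮ z in C(0, R), multiCircleIntegral n (fun w => f (Fin.cons z w)) R

/-!
Expanding both determinants by the Leibniz formula turns the integrand into a signed sum,
over pairs of permutations `(σ, τ)`, of products `∏ₖ e^{x_{σ k} λₖ} (λₖ - y_{τ k})⁻¹` of
functions of one variable each. The iterated integral of such a product factorizes, and by
Cauchy's integral formula each factor equals `2πi e^{x_{σ k} y_{τ k}}`. The remaining signed sum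
`∑_{σ,τ} sign σ sign τ ∏ₖ M_{σ k, τ k}` is `n! det M`, since for each fixed `τ` the sum over `σ`
is the determinant of `M` with its columns permuted by `τ`.
-/

section Determinant

variable {ι R : Type*} [Fintype ι] [DecidableEq ι] [CommRing R]

theorem Matrix.det_mul_det_eq_sum_perm_prod (A B : Matrix ι ι R) :
    A.det * B.det = ∑ p : Perm ι × Perm ι,
      ((Perm.sign p.1 : ℤ) : R) * ((Perm.sign p.2 : ℤ) : R) * ∏ k, A (p.1 k) k * B k (p.2 k) := by
  rw [← det_transpose B, det_apply', det_apply', Finset.sum_mul_sum, Fintype.sum_prod_type]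
  refine Finset.sum_congr rfl fun σ _ => Finset.sum_congr rfl fun τ _ => ?_
  simp only [transpose_apply, Finset.prod_mul_distrib]
  ring

theorem Matrix.sum_perm_prod_eq_sign_mul_det (M : Matrix ι ι R) (τ : Perm ι) :
    ∑ σ : Perm ι, ((Perm.sign σ : ℤ) : R) * ∏ k, M (σ k) (τ k) = Perm.sign τ * M.det := by
  rw [← det_permute', det_apply']
  rfl

theorem Matrix.sum_perm_perm_prod_eq_factorial_mul_det (M : Matrix ι ι R) :
    ∑ p : Perm ι × Perm ι,
      ((Perm.sign p.1 : ℤ) : R) * ((Perm.sign p.2 : ℤ) : R) * ∏ k, M (p.1 k) (p.2 k) =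
    (Fintype.card ι).factorial * M.det := by
  have sign_mul_self (τ : Perm ι) : ((Perm.sign τ : ℤ) : R) * ((Perm.sign τ : ℤ) : R) = 1 := by
    rw [← Int.cast_mul, ← Units.val_mul, Int.units_mul_self, Units.val_one, Int.cast_one]
  calc _ = ∑ τ : Perm ι, ((Perm.sign τ : ℤ) : R) *
          ∑ σ : Perm ι, ((Perm.sign σ : ℤ) : R) * ∏ k, M (σ k) (τ k) := by
        rw [Fintype.sum_prod_type_right]
        simp only [Finset.mul_sum]
        exact Finset.sum_congr rfl fun τ _ => Finset.sum_congr rfl fun σ _ => by ring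
    _ = ∑ _τ : Perm ι, M.det := by
        simp only [sum_perm_prod_eq_sign_mul_det, ← mul_assoc, sign_mul_self, one_mul]
    _ = _ := by rw [Finset.sum_const, Finset.card_univ, Fintype.card_perm, nsmul_eq_mul]

end Determinant

theorem multiCircleIntegral_sum_mul_prod {ι : Type*} (R : ℝ) (n : ℕ) (S : Finset ι)
    (c : ι → ℂ) (g : ι → Fin n → ℂ → ℂ) (hg : ∀ s ∈ S, ∀ k, CircleIntegrable (g s k) 0 R) :
    multiCircleIntegral n (fun l => ∑ s ∈ S, c s * ∏ k, g s k (l k)) R =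
      ∑ s ∈ S, c s * ∏ k, ∮ z in C(0, R), g s k z := by
  induction n generalizing c with
  | zero => simp [multiCircleIntegral]
  | succ n ih =>
    have peel_first (z : ℂ) :
        multiCircleIntegral n
          (fun w => ∑ s ∈ S, c s * ∏ k, g s k ((Fin.cons z w : Fin (n + 1) → ℂ) k)) R =
        ∑ s ∈ S, (c s * ∏ k : Fin n, ∮ ζ in C(0, R), g s k.succ ζ) * g s 0 z := by
      have split_first :
          (fun w => ∑ s ∈ S, c s * ∏ k, g s k ((Fin.cons z w : Fin (n + 1) → ℂ) k)) =
            fun w => ∑ s ∈ S, (c s * g s 0 z) * ∏ k : Fin n, g s k.succ (w k) := by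
        funext w
        simp only [Fin.prod_univ_succ, Fin.cons_zero, Fin.cons_succ, mul_assoc]
      rw [split_first,
        ih (fun s => c s * g s 0 z) (fun s k => g s k.succ) fun s hs k => hg s hs k.succ]
      exact Finset.sum_congr rfl fun s _ => by ring
    rw [multiCircleIntegral]
    simp only [peel_first]
    rw [circleIntegral.integral_fun_sum
      (f := fun s z => (c s * ∏ k : Fin n, ∮ ζ in C(0, R), g s k.succ ζ) * g s 0 z)
      fun s hs => (hg s hs 0).const_mul _]
    refine Finset.sum_congr rfl fun s _ => ?_
    rw [circleIntegral.integral_const_mul, Fin.prod_univ_succ]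
    ring

theorem circleIntegrable_exp_mul_mul_inv_sub {R : ℝ} (a : ℂ) {w : ℂ} (hw : ‖w‖ < R) :
    CircleIntegrable (fun z => Complex.exp (a * z) * (z - w)⁻¹) 0 R := by
  refine ContinuousOn.circleIntegrable ((norm_nonneg w).trans hw.le) ?_
  refine (by fun_prop : Continuous fun z => Complex.exp (a * z)).continuousOn.mul ?_
  refine fun z hz => (by fun_prop : ContinuousAt (· - w) z).inv₀ ?_ |>.continuousWithinAt
  intro hzw
  rw [mem_sphere_zero_iff_norm, sub_eq_zero.mp hzw] at hz
  exact hw.ne hz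

theorem circleIntegral_exp_mul_mul_inv_sub {R : ℝ} (a : ℂ) {w : ℂ} (hw : ‖w‖ < R) :
    (∮ z in C(0, R), Complex.exp (a * z) * (z - w)⁻¹) =
      2 * Real.pi * Complex.I * Complex.exp (a * w) := by
  have hw' : w ∈ Metric.ball (0 : ℂ) R := mem_ball_zero_iff.mpr hw
  simpa only [smul_eq_mul, mul_comm (_ - w)⁻¹] using
    (by fun_prop : Differentiable ℂ fun z => Complex.exp (a * z)).diffContOnCl
      |>.circleIntegral_sub_inv_smul hw'

theorem statement18 (n : ℕ) (x : Fin n → ℝ) (y : Fin n → ℂ) (R : ℝ) (hR : ∀ j, ‖y j‖ < R) :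
    multiCircleIntegral n
      (fun l => (Matrix.of fun i j => Complex.exp ((x i : ℂ) * l j)).det *
        (Matrix.of fun i j : Fin n => (l i - y j)⁻¹).det) R =
    (2 * Real.pi * Complex.I) ^ n * (Nat.factorial n : ℂ) *
      (Matrix.of fun i j => Complex.exp ((x i : ℂ) * y j)).det := by
  let g (p : Perm (Fin n) × Perm (Fin n)) (k : Fin n) (z : ℂ) : ℂ :=
    Complex.exp ((x (p.1 k) : ℂ) * z) * (z - y (p.2 k))⁻¹
  have integrand_eq_sum : (fun l : Fin n → ℂ =>
      (Matrix.of fun i j => Complex.exp ((x i : ℂ) * l j)).det *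
        (Matrix.of fun i j : Fin n => (l i - y j)⁻¹).det) = fun l =>
      ∑ p ∈ Finset.univ, ((Perm.sign p.1 : ℤ) : ℂ) * ((Perm.sign p.2 : ℤ) : ℂ) *
        ∏ k, g p k (l k) := by
    funext l
    exact det_mul_det_eq_sum_perm_prod _ _
  rw [integrand_eq_sum, multiCircleIntegral_sum_mul_prod R n _ _ g
    fun p _ k => circleIntegrable_exp_mul_mul_inv_sub _ (hR _)]
  simp only [g, circleIntegral_exp_mul_mul_inv_sub _ (hR _), Finset.prod_mul_distrib,
    Finset.prod_const, Finset.card_univ, Fintype.card_fin]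
  have resum := sum_perm_perm_prod_eq_factorial_mul_det
    (Matrix.of fun i j => Complex.exp ((x i : ℂ) * y j))
  rw [Fintype.card_fin] at resum
  rw [mul_assoc _ (n.factorial : ℂ), ← resum, Finset.mul_sum]
  exact Finset.sum_congr rfl fun p _ => by simp only [of_apply]; ring
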